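/- When a new client c is added, any server s whose old balanced load satisfies α^old(s) < min_{v ∈ N(c)} α^old(v) has unchanged balanced load: α^new(s) = α^old(s). That is, inserting c cannot affect servers whose load was strictly below the minimum load among c's neighbors. -/

import Mathlib

open scoped Classical

/-- The load of server `s` under flow `x`. -/
def load {C S : Type*} [Fintype C] (x : C → S → ℝ) (s : S) : ℝ := ∑ c, x c s

/-- `x` is a server flow: nonnegative, supported on edges, each client sends one unit. -/
def IsServerFlow {C S : Type*} [Fintype S] (Adj : C → S → Prop) (x : C → S → ℝ) : Prop :=
  (∀ c s, 0 ≤ x c s) ∧ (∀ c s, ¬ Adj c s → x c s = 0) ∧ (∀ c, ∑ s, x c s = 1)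

/-- `x` is balanced: each client only sends flow to its minimum-load neighbors. -/
def IsBalanced {C S : Type*} [Fintype C] [Fintype S] (Adj : C → S → Prop)
    (x : C → S → ℝ) : Prop :=
  ∀ c s, 0 < x c s → ∀ s', Adj c s' → load x s ≤ load x s'

/-- The active neighbors `A(c)` of a client `c`: the minimum-load neighbors of `c`. -/
noncomputable def activeN {C S : Type*} [Fintype C] [Fintype S] (Adj : C → S → Prop)
    (x : C → S → ℝ) (c : C) : Finset S :=
  Finset.univ.filter fun s => Adj c s ∧ ∀ s', Adj c s' → load x s ≤ load x s'

/-!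
Both parts are mass-balance arguments over a set of servers closed under the relevant load order.
Monotonicity: on `T = {s | α^new(s) < α^old(s)}`, every old client that sends old flow into `T`
sends all its new flow into `T` (balance of both flows), so `T` receives at least as much new flow
as old flow, which contradicts the strict load drop on a nonempty `T`.
Main claim: on `W = {s | α^old(s) ≤ α^old(s₀)}` the new client sends nothing and every client
with new flow into `W` sent all its old flow into `W`, so `W`'s total load does not grow; being
monotone, the loads on `W` are then unchanged.
-/

open Finset

lemma sum_le_sum_of_concentrated {S : Type*} [Fintype S] (T : Finset S) (p q : S → ℝ)
    (hp0 : ∀ s, 0 ≤ p s) (hq0 : ∀ s, 0 ≤ q s) (hp1 : ∑ s, p s = 1) (hq1 : ∑ s, q s = 1)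
    (hconc : (∃ s ∈ T, 0 < q s) → ∀ s ∉ T, p s = 0) :
    ∑ s ∈ T, q s ≤ ∑ s ∈ T, p s := by
  by_cases hq : ∃ s ∈ T, 0 < q s
  · have hpT : ∑ s ∈ T, p s = 1 := by
      rw [sum_subset (subset_univ T) fun s _ hs => hconc hq s hs, hp1]
    exact hpT ▸ hq1 ▸ sum_le_univ_sum_of_nonneg hq0
  · push Not at hq
    exact (sum_nonpos hq).trans (sum_nonneg fun s _ => hp0 s)

lemma IsServerFlow.adj_of_pos {C S : Type*} [Fintype S] {Adj : C → S → Prop} {x : C → S → ℝ}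
    (hx : IsServerFlow Adj x) {c : C} {s : S} (hpos : 0 < x c s) : Adj c s :=
  by_contra fun h => hpos.ne' (hx.2.1 c s h)

lemma IsServerFlow.pos_of_ne_zero {C S : Type*} [Fintype S] {Adj : C → S → Prop} {x : C → S → ℝ}
    (hx : IsServerFlow Adj x) {c : C} {s : S} (hne : x c s ≠ 0) : 0 < x c s :=
  (hx.1 c s).lt_of_ne' hne

lemma sum_load_eq_sum_sum {C S : Type*} [Fintype C] (x : C → S → ℝ) (T : Finset S) :
    ∑ s ∈ T, load x s = ∑ c, ∑ s ∈ T, x c s := by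
  simp only [load]
  exact sum_comm

lemma sum_load_option_eq {C S : Type*} [Fintype C] (y : Option C → S → ℝ) (T : Finset S) :
    ∑ s ∈ T, load y s = ∑ s ∈ T, y none s + ∑ c, ∑ s ∈ T, y (some c) s := by
  rw [sum_load_eq_sum_sum, Fintype.sum_option]

section Insertion

variable {C S : Type*} [Fintype C] [Fintype S] {Adj : C → S → Prop} {Adj' : Option C → S → Prop}
  {x : C → S → ℝ} {y : Option C → S → ℝ}

lemma load_le_load_of_insert (hAdj' : ∀ c s, Adj' (some c) s ↔ Adj c s)
    (hx : IsServerFlow Adj x ∧ IsBalanced Adj x) (hy : IsServerFlow Adj' y ∧ IsBalanced Adj' y)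
    (s : S) : load x s ≤ load y s := by
  by_contra! hs
  set T := univ.filter fun s => load y s < load x s
  have hclosed (c : C) : (∃ s ∈ T, 0 < x c s) → ∀ s' ∉ T, y (some c) s' = 0 := by
    rintro ⟨s, hsT, hxs⟩ s' hs'T
    by_contra hys'
    have hys' := hy.1.pos_of_ne_zero hys'
    have h₁ := hx.2 c s hxs s' ((hAdj' c s').1 (hy.1.adj_of_pos hys'))
    have h₂ := hy.2 (some c) s' hys' s ((hAdj' c s).2 (hx.1.adj_of_pos hxs))
    simp only [T, mem_filter, mem_univ, true_and, not_lt] at hsT hs'T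
    linarith
  have hle : ∑ s ∈ T, load x s ≤ ∑ s ∈ T, load y s := by
    rw [sum_load_eq_sum_sum, sum_load_option_eq]
    have hnone : 0 ≤ ∑ s ∈ T, y none s := sum_nonneg fun s _ => hy.1.1 none s
    have hsome := sum_le_sum fun c (_ : c ∈ univ) =>
      sum_le_sum_of_concentrated T (y (some c)) (x c) (hy.1.1 (some c)) (hx.1.1 c)
        (hy.1.2.2 (some c)) (hx.1.2.2 c) (hclosed c)
    linarith
  have hlt : ∑ s ∈ T, load y s < ∑ s ∈ T, load x s :=
    sum_lt_sum_of_nonempty ⟨s, by simpa [T] using hs⟩ fun s hsT => by simpa [T] using hsT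
  linarith

lemma load_insert_eq_of_lt {newAdj : S → Prop}
    (hAdj' : ∀ o s, Adj' o s ↔ o.elim (newAdj s) (fun c => Adj c s))
    (hx : IsServerFlow Adj x ∧ IsBalanced Adj x) (hy : IsServerFlow Adj' y ∧ IsBalanced Adj' y)
    (s₀ : S) (hlow : ∀ v, newAdj v → load x s₀ < load x v) :
    load y s₀ = load x s₀ := by
  have hmono := load_le_load_of_insert (fun c s => hAdj' (some c) s) hx hy
  set W := univ.filter fun s => load x s ≤ load x s₀
  have hnone : ∀ s ∈ W, y none s = 0 := by
    intro s hsW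
    by_contra hys
    have hnew := (hAdj' none s).1 (hy.1.adj_of_pos (hy.1.pos_of_ne_zero hys))
    simp only [W, mem_filter, mem_univ, true_and] at hsW
    exact (hsW.trans_lt (hlow s hnew)).false
  have hclosed (c : C) : (∃ s ∈ W, 0 < y (some c) s) → ∀ s' ∉ W, x c s' = 0 := by
    rintro ⟨s, hsW, hys⟩ s' hs'W
    by_contra hxs'
    have h := hx.2 c s' (hx.1.pos_of_ne_zero hxs') s
      ((hAdj' (some c) s).1 (hy.1.adj_of_pos hys))
    simp only [W, mem_filter, mem_univ, true_and] at hsW hs'W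
    exact hs'W (h.trans hsW)
  have hle : ∑ s ∈ W, load y s ≤ ∑ s ∈ W, load x s := by
    rw [sum_load_option_eq, sum_eq_zero hnone, zero_add, sum_load_eq_sum_sum]
    exact sum_le_sum fun c _ =>
      sum_le_sum_of_concentrated W (x c) (y (some c)) (hx.1.1 c) (hy.1.1 (some c))
        (hx.1.2.2 c) (hy.1.2.2 (some c)) (hclosed c)
  have heq := (sum_eq_sum_iff_of_le fun s _ => hmono s).1
    (le_antisymm (sum_le_sum fun s _ => hmono s) hle)
  exact (heq s₀ (by simp [W])).symm

end Insertion

theorem stmt_11_general {C S : Type*} [Fintype C] [Fintype S]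
    (Adj : C → S → Prop) (newAdj : S → Prop)
    (Adj' : Option C → S → Prop)
    (hAdj' : ∀ o s, Adj' o s ↔ o.elim (newAdj s) (fun c => Adj c s))
    (x : C → S → ℝ) (y : Option C → S → ℝ)
    (hx : IsServerFlow Adj x ∧ IsBalanced Adj x)
    (hy : IsServerFlow Adj' y ∧ IsBalanced Adj' y) :
    ∀ s, (∀ v, newAdj v → load x s < load x v) → load y s = load x s :=
  load_insert_eq_of_lt hAdj' hx hy

/-- When a new client `c` is inserted, any server whose old balanced load is strictly
below the minimum old load among `c`'s neighbors keeps exactly the same balanced load. -/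
theorem stmt_11 {C S : Type*} [Fintype C] [Fintype S]
    (Adj : C → S → Prop) (newAdj : S → Prop)
    (hnb : ∀ c : C, ∃ s, Adj c s) (hnew : ∃ s, newAdj s)
    (Adj' : Option C → S → Prop)
    (hAdj' : ∀ o s, Adj' o s ↔ o.elim (newAdj s) (fun c => Adj c s))
    (x : C → S → ℝ) (y : Option C → S → ℝ)
    (hx : IsServerFlow Adj x ∧ IsBalanced Adj x)
    (hy : IsServerFlow Adj' y ∧ IsBalanced Adj' y) :
    ∀ s, (∀ v, newAdj v → load x s < load x v) → load y s = load x s :=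
  stmt_11_general Adj newAdj Adj' hAdj' x y hx hy
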